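/- arXiv:1707.08201 — 6 statements merged into one kernel-verified Lean document; each statement's English description precedes it below -/
import Mathlib

section
/- Let n ≥ 1, let F₁₃ ∈ ℝ^{n×1} be a column vector and F₃₁ ∈ ℝ^{1×n} a row vector. Then the (n+1)×(n+1) block matrix [[F₁₃, Iₙ], [0, F₃₁]] (first column (F₁₃; 0), remaining columns (Iₙ; F₃₁)) is invertible if and only if the scalar product F₃₁ · F₁₃ is nonzero. -/
/-!
Permuting rows and columns turns the bordered matrix `[[v, H], [0, w]]` into the block matrix
`[[H, v], [w, 0]]`. For invertible `H` the Schur complement gives its determinant as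
`det H * (-(w H⁻¹ v))`, so it is invertible exactly when the scalar `w H⁻¹ v` is nonzero.
-/

open Matrix

/-- The bordered matrix `[[v, H], [0, w]]`: its first column is `(v; 0)` and its
remaining `n` columns are `(H; w)`. -/
noncomputable def borderedMatrix {n : ℕ} (v : Matrix (Fin n) (Fin 1) ℝ)
    (H : Matrix (Fin n) (Fin n) ℝ) (w : Matrix (Fin 1) (Fin n) ℝ) :
    Matrix (Fin (n + 1)) (Fin (n + 1)) ℝ :=
  Matrix.of fun i j =>
    Fin.lastCases (motive := fun _ => ℝ)
      (Fin.cases (motive := fun _ => ℝ) 0 (fun j' => w 0 j') j)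
      (fun i' => Fin.cases (motive := fun _ => ℝ) (v i' 0) (fun j' => H i' j') j)
      i

theorem finRotate_symm_zero (n : ℕ) : (finRotate (n + 1)).symm 0 = Fin.last n :=
  (finRotate _).symm_apply_eq.2 finRotate_last.symm

theorem finRotate_symm_succ {n : ℕ} (j : Fin n) :
    (finRotate (n + 1)).symm j.succ = j.castSucc :=
  (finRotate _).symm_apply_eq.2 (by rw [finRotate_apply, Fin.coeSucc_eq_succ])

theorem borderedMatrix_eq_submatrix_fromBlocks {n : ℕ} (v : Matrix (Fin n) (Fin 1) ℝ)
    (H : Matrix (Fin n) (Fin n) ℝ) (w : Matrix (Fin 1) (Fin n) ℝ) :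
    borderedMatrix v H w =
      (fromBlocks H v w 0).submatrix finSumFinEquiv.symm
        ((finRotate (n + 1)).symm.trans finSumFinEquiv.symm) := by
  ext i j
  induction i using Fin.lastCases <;> induction j using Fin.cases <;>
    simp [borderedMatrix, -finRotate_symm_apply, finRotate_symm_zero, finRotate_symm_succ]

theorem isUnit_borderedMatrix_iff {n : ℕ} (v : Matrix (Fin n) (Fin 1) ℝ)
    {H : Matrix (Fin n) (Fin n) ℝ} (w : Matrix (Fin 1) (Fin n) ℝ) (hH : IsUnit H) :
    IsUnit (borderedMatrix v H w) ↔ (w * H⁻¹ * v) 0 0 ≠ 0 := by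
  have := hH.invertible
  rw [borderedMatrix_eq_submatrix_fromBlocks, isUnit_submatrix_equiv, isUnit_iff_isUnit_det,
    det_fromBlocks₁₁, invOf_eq_nonsing_inv, zero_sub, det_fin_one, isUnit_iff_ne_zero,
    mul_ne_zero_iff, neg_apply, neg_ne_zero]
  exact and_iff_right ((isUnit_iff_isUnit_det H).1 hH).ne_zero

theorem phaseCondition_matrix_isUnit_iff_general {n : ℕ}
    (F₁₃ : Matrix (Fin n) (Fin 1) ℝ) (F₃₁ : Matrix (Fin 1) (Fin n) ℝ) :
    IsUnit (borderedMatrix F₁₃ (1 : Matrix (Fin n) (Fin n) ℝ) F₃₁) ↔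
      (F₃₁ * F₁₃) 0 0 ≠ 0 := by
  simpa using isUnit_borderedMatrix_iff F₁₃ F₃₁ isUnit_one

/-- for `n ≥ 1`, the block matrix `[[F₁₃, Iₙ], [0, F₃₁]]`
(first column `(F₁₃; 0)`, remaining columns `(Iₙ; F₃₁)`) is invertible iff the
scalar product `F₃₁ · F₁₃` is nonzero. -/
theorem phaseCondition_matrix_isUnit_iff {n : ℕ} (hn : 1 ≤ n)
    (F₁₃ : Matrix (Fin n) (Fin 1) ℝ) (F₃₁ : Matrix (Fin 1) (Fin n) ℝ) :
    IsUnit (borderedMatrix F₁₃ (1 : Matrix (Fin n) (Fin n) ℝ) F₃₁) ↔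
      (F₃₁ * F₁₃) 0 0 ≠ 0 :=
  phaseCondition_matrix_isUnit_iff_general F₁₃ F₃₁
end

section
/- Let n₁, n₂ ≥ 1, let F₁₃ ∈ ℝ^{n₁×1}, A ∈ ℝ^{n₂×n₁}, let B ∈ ℝ^{n₂×n₂} be invertible, and let F₃₂ ∈ ℝ^{1×n₂}. Then the (n₁+n₂+1)×(n₁+n₂+1) block matrix [[F₁₃, I_{n₁}, 0], [0, A, B], [0, 0, F₃₂]] is invertible if and only if the scalar F₃₂ B⁻¹ A F₁₃ is nonzero. -/
/-!
Back substitution in `M (x₀, x₁, x₂) = 0`: the first block row gives `x₁ = -F₁₃ x₀`, the second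
`x₂ = -B⁻¹ A x₁ = B⁻¹ A F₁₃ x₀`, and the last then reads `(F₃₂ B⁻¹ A F₁₃) x₀ = 0`. Hence `M` is
injective exactly when the scalar `F₃₂ B⁻¹ A F₁₃` is nonzero, and since `M` has as many rows as
columns, injectivity is bijectivity.
-/

open Matrix

namespace Matrix

theorem mulVec_bijective_iff_injective_of_card_eq {K m n : Type*} [Field K] [Fintype m]
    [Fintype n] (M : Matrix m n K) (h : Fintype.card m = Fintype.card n) :
    Function.Bijective M.mulVec ↔ Function.Injective M.mulVec :=
  and_iff_left_of_imp (LinearMap.injective_iff_surjective_of_finrank_eq_finrank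
    (f := M.mulVecLin) (by simp [h])).mp

theorem mulVec_injective_iff_apply_ne_zero {K ι : Type*} [Field K] [Unique ι] [DecidableEq ι]
    (S : Matrix ι ι K) : Function.Injective S.mulVec ↔ S default default ≠ 0 := by
  rw [mulVec_injective_iff_isUnit, isUnit_iff_isUnit_det, det_unique, isUnit_iff_ne_zero]

theorem add_mulVec_eq_zero_iff {R n : Type*} [CommRing R] [Fintype n] [DecidableEq n]
    {B : Matrix n n R} (hB : IsUnit B) (y x : n → R) :
    y + B *ᵥ x = 0 ↔ x = -(B⁻¹ *ᵥ y) := by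
  rw [add_comm, ← eq_neg_iff_add_eq_zero]
  have hB' := (isUnit_iff_isUnit_det B).mp hB
  constructor
  · intro h
    rw [← mulVec_neg, ← h, mulVec_mulVec, nonsing_inv_mul B hB', one_mulVec]
  · rintro rfl
    rw [mulVec_neg, mulVec_mulVec, mul_nonsing_inv B hB', one_mulVec]

end Matrix

variable {R : Type*} [CommRing R] {k n₁ n₂ : Type*} [Fintype k] [Fintype n₁] [Fintype n₂]
  [DecidableEq n₁]

def indexTwoMatrix (F₁₃ : Matrix n₁ k R) (A : Matrix n₂ n₁ R) (B : Matrix n₂ n₂ R)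
    (F₃₂ : Matrix k n₂ R) : Matrix (n₁ ⊕ (n₂ ⊕ k)) (k ⊕ (n₁ ⊕ n₂)) R :=
  fromBlocks F₁₃ (fromCols 1 0) 0 (fromRows (fromCols A B) (fromCols 0 F₃₂))

theorem indexTwoMatrix_mulVec (F₁₃ : Matrix n₁ k R) (A : Matrix n₂ n₁ R) (B : Matrix n₂ n₂ R)
    (F₃₂ : Matrix k n₂ R) (x₀ : k → R) (x₁ : n₁ → R) (x₂ : n₂ → R) :
    indexTwoMatrix F₁₃ A B F₃₂ *ᵥ Sum.elim x₀ (Sum.elim x₁ x₂) =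
      Sum.elim (F₁₃ *ᵥ x₀ + x₁) (Sum.elim (A *ᵥ x₁ + B *ᵥ x₂) (F₃₂ *ᵥ x₂)) := by
  simp [indexTwoMatrix, fromBlocks_mulVec]

theorem indexTwoMatrix_mulVec_eq_zero_iff [DecidableEq n₂] (F₁₃ : Matrix n₁ k R)
    (A : Matrix n₂ n₁ R) {B : Matrix n₂ n₂ R} (hB : IsUnit B) (F₃₂ : Matrix k n₂ R)
    (x₀ : k → R) (x₁ : n₁ → R) (x₂ : n₂ → R) :
    indexTwoMatrix F₁₃ A B F₃₂ *ᵥ Sum.elim x₀ (Sum.elim x₁ x₂) = 0 ↔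
      x₁ = -(F₁₃ *ᵥ x₀) ∧ x₂ = (B⁻¹ * A * F₁₃) *ᵥ x₀ ∧ (F₃₂ * B⁻¹ * A * F₁₃) *ᵥ x₀ = 0 := by
  rw [indexTwoMatrix_mulVec, ← Sum.elim_zero_zero, Sum.elim_eq_iff, ← Sum.elim_zero_zero,
    Sum.elim_eq_iff, add_comm, ← eq_neg_iff_add_eq_zero, add_mulVec_eq_zero_iff hB]
  refine and_congr_right fun hx₁ => ?_
  have hx₂ : -(B⁻¹ *ᵥ A *ᵥ x₁) = (B⁻¹ * A * F₁₃) *ᵥ x₀ := by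
    simp only [hx₁, mulVec_neg, neg_neg, mulVec_mulVec, Matrix.mul_assoc]
  rw [hx₂]
  refine and_congr_right fun hx₂ => ?_
  rw [hx₂, mulVec_mulVec]
  simp only [← Matrix.mul_assoc]

theorem injective_mulVec_indexTwoMatrix_iff [DecidableEq n₂] (F₁₃ : Matrix n₁ k R)
    (A : Matrix n₂ n₁ R) {B : Matrix n₂ n₂ R} (hB : IsUnit B) (F₃₂ : Matrix k n₂ R) :
    Function.Injective (indexTwoMatrix F₁₃ A B F₃₂).mulVec ↔
      Function.Injective (F₃₂ * B⁻¹ * A * F₁₃).mulVec := by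
  rw [← coe_mulVecLin, injective_iff_map_eq_zero, ← coe_mulVecLin, injective_iff_map_eq_zero]
  simp only [mulVecLin_apply]
  constructor
  · intro hM x₀ hx₀
    have := hM _ ((indexTwoMatrix_mulVec_eq_zero_iff F₁₃ A hB F₃₂ x₀ _ _).mpr ⟨rfl, rfl, hx₀⟩)
    simpa using congrArg (· ∘ Sum.inl) this
  · intro hS v hv
    rw [← Sum.elim_comp_inl_inr v, ← Sum.elim_comp_inl_inr (v ∘ Sum.inr)] at hv ⊢
    obtain ⟨hx₁, hx₂, hx₀⟩ := (indexTwoMatrix_mulVec_eq_zero_iff F₁₃ A hB F₃₂ _ _ _).mp hv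
    rw [hx₁, hx₂, hS _ hx₀]
    simp

theorem phaseCondition_algebraic_index2_criterion_general {n₁ n₂ : ℕ}
    (F₁₃ : Matrix (Fin n₁) (Fin 1) ℝ) (A : Matrix (Fin n₂) (Fin n₁) ℝ)
    (B : Matrix (Fin n₂) (Fin n₂) ℝ) (hB : IsUnit B)
    (F₃₂ : Matrix (Fin 1) (Fin n₂) ℝ) :
    Function.Bijective
        (Matrix.mulVec
          (Matrix.fromBlocks F₁₃
            (Matrix.fromCols (1 : Matrix (Fin n₁) (Fin n₁) ℝ)
              (0 : Matrix (Fin n₁) (Fin n₂) ℝ))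
            (0 : Matrix (Fin n₂ ⊕ Fin 1) (Fin 1) ℝ)
            (Matrix.fromRows (Matrix.fromCols A B)
              (Matrix.fromCols (0 : Matrix (Fin 1) (Fin n₁) ℝ) F₃₂)))) ↔
      (F₃₂ * B⁻¹ * A * F₁₃) 0 0 ≠ 0 := by
  change Function.Bijective (indexTwoMatrix F₁₃ A B F₃₂).mulVec ↔ _
  rw [mulVec_bijective_iff_injective_of_card_eq _ (by simp; omega),
    injective_mulVec_indexTwoMatrix_iff F₁₃ A hB F₃₂]
  exact mulVec_injective_iff_apply_ne_zero _

/-- the `(n₁+n₂+1)×(n₁+n₂+1)` block matrix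
`[[F₁₃, I_{n₁}, 0], [0, A, B], [0, 0, F₃₂]]` (block rows of heights `n₁, n₂, 1`,
block columns of widths `1, n₁, n₂`), with `B` invertible, is invertible iff the
scalar `F₃₂ B⁻¹ A F₁₃` is nonzero.  Invertibility of the square-shaped matrix is
expressed as bijectivity of the associated linear map `x ↦ M x`. -/
theorem phaseCondition_algebraic_index2_criterion {n₁ n₂ : ℕ}
    (hn₁ : 1 ≤ n₁) (hn₂ : 1 ≤ n₂)
    (F₁₃ : Matrix (Fin n₁) (Fin 1) ℝ) (A : Matrix (Fin n₂) (Fin n₁) ℝ)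
    (B : Matrix (Fin n₂) (Fin n₂) ℝ) (hB : IsUnit B)
    (F₃₂ : Matrix (Fin 1) (Fin n₂) ℝ) :
    Function.Bijective
        (Matrix.mulVec
          (Matrix.fromBlocks F₁₃
            (Matrix.fromCols (1 : Matrix (Fin n₁) (Fin n₁) ℝ)
              (0 : Matrix (Fin n₁) (Fin n₂) ℝ))
            (0 : Matrix (Fin n₂ ⊕ Fin 1) (Fin 1) ℝ)
            (Matrix.fromRows (Matrix.fromCols A B)
              (Matrix.fromCols (0 : Matrix (Fin 1) (Fin n₁) ℝ) F₃₂)))) ↔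
      (F₃₂ * B⁻¹ * A * F₁₃) 0 0 ≠ 0 :=
  phaseCondition_algebraic_index2_criterion_general F₁₃ A B hB F₃₂
end

section
/- Let n₁, n₂ ≥ 1, let F₁₃ ∈ ℝ^{n₁×1}, A ∈ ℝ^{n₂×n₁}, let B ∈ ℝ^{n₂×n₂} be invertible, and let F₃₁ ∈ ℝ^{1×n₁}, F₃₂ ∈ ℝ^{1×n₂}. Then the (n₁+n₂+1)×(n₁+n₂+1) block matrix [[F₁₃, I_{n₁}, 0], [0, A, B], [0, F₃₁, F₃₂]] is invertible if and only if F₃₁ F₁₃ − F₃₂ B⁻¹ A F₁₃ ≠ 0. -/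
/-!
Moving the last block row to the top turns the matrix into `[[0, F₃], [F₁, D]]` with
`F₃ = [F₃₁ F₃₂]`, `F₁ = [F₁₃; 0]` and `D = [[I, 0], [A, B]]`, which is invertible because `B` is.
Such a matrix is invertible iff its Schur complement `-F₃ D⁻¹ F₁` is, and since
`D⁻¹ = [[I, 0], [-B⁻¹A, B⁻¹]]` this complement is the `1 × 1` matrix
`-(F₃₁ F₁₃ - F₃₂ B⁻¹ A F₁₃)`.
-/

open Matrix

namespace Matrix

variable {l m n R K : Type*}

theorem submatrix_fromBlocks_fromCols_one_zero_fromRows [DecidableEq m] [Zero R] [One R]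
    (c : Matrix l m R) (d : Matrix l n R) (f : Matrix m l R) (A : Matrix n m R)
    (B : Matrix n n R) :
    (fromBlocks f (fromCols 1 0) 0 (fromRows (fromCols A B) (fromCols c d))).submatrix
        ((Equiv.sumComm _ _).trans (Equiv.sumAssoc m n l)) id =
      fromBlocks 0 (fromCols c d) (fromRows f 0) (fromBlocks 1 0 A B) := by
  ext (i | i | i) (j | j | j) <;> simp

section Field
variable [Fintype n] [DecidableEq n] [Field K]

theorem bijective_mulVec_iff_isUnit {M : Matrix n n K} :
    Function.Bijective M.mulVec ↔ IsUnit M :=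
  ⟨fun h ↦ mulVec_injective_iff_isUnit.mp h.1,
    fun h ↦ ⟨mulVec_injective_iff_isUnit.mpr h, mulVec_surjective_iff_isUnit.mpr h⟩⟩

theorem bijective_mulVec_iff_isUnit_submatrix (M : Matrix m n K) (e : n ≃ m) :
    Function.Bijective M.mulVec ↔ IsUnit (M.submatrix e id) := by
  have : (M.submatrix e id).mulVec = (· ∘ e) ∘ M.mulVec := by
    funext v
    simpa using submatrix_mulVec_equiv M v e (Equiv.refl n)
  rw [← bijective_mulVec_iff_isUnit, this]
  exact (Equiv.comp_bijective M.mulVec (e.symm.arrowCongr (Equiv.refl K))).symm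

theorem isUnit_iff_apply_ne_zero [Unique n] {M : Matrix n n K} :
    IsUnit M ↔ M default default ≠ 0 := by
  rw [isUnit_iff_isUnit_det, det_unique, isUnit_iff_ne_zero]

end Field

section CommRing
variable [Fintype m] [DecidableEq m] [Fintype n] [DecidableEq n] [CommRing R]

theorem fromCols_mul_invOf_fromBlocks_one_zero_mul_fromRows_zero (c : Matrix l m R)
    (d : Matrix l n R) (f : Matrix m l R) (A : Matrix n m R) (B : Matrix n n R) [Invertible B]
    [Invertible (fromBlocks (1 : Matrix m m R) 0 A B)] :
    fromCols c d * ⅟(fromBlocks 1 0 A B : Matrix (m ⊕ n) (m ⊕ n) R) *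
        fromRows f (0 : Matrix n l R) = c * f - d * ⅟B * A * f := by
  have : Invertible (1 : Matrix m m R) := invertibleOne
  rw [invOf_fromBlocks_zero₁₂_eq, invOf_one, Matrix.fromCols_mul_fromBlocks,
    Matrix.fromCols_mul_fromRows]
  simp [Matrix.add_mul, Matrix.neg_mul, Matrix.mul_assoc, sub_eq_add_neg]

theorem isUnit_fromBlocks_zero_fromRows_fromBlocks_one_zero_iff [Fintype l] [DecidableEq l]
    (c : Matrix l m R) (d : Matrix l n R) (f : Matrix m l R) (A : Matrix n m R)
    {B : Matrix n n R} (hB : IsUnit B) :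
    IsUnit (fromBlocks 0 (fromCols c d) (fromRows f (0 : Matrix n l R)) (fromBlocks 1 0 A B)) ↔
      IsUnit (c * f - d * B⁻¹ * A * f) := by
  have : Invertible B := hB.invertible
  have : Invertible (1 : Matrix m m R) := invertibleOne
  have : Invertible (fromBlocks 1 0 A B) := fromBlocksZero₁₂Invertible 1 A B
  rw [isUnit_fromBlocks_iff_of_invertible₂₂,
    fromCols_mul_invOf_fromBlocks_one_zero_mul_fromRows_zero, zero_sub, IsUnit.neg_iff,
    invOf_eq_nonsing_inv]

end CommRing

end Matrix

theorem optimality_index2_criterion_general {n₁ n₂ : ℕ}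
    (F₁₃ : Matrix (Fin n₁) (Fin 1) ℝ) (A : Matrix (Fin n₂) (Fin n₁) ℝ)
    (B : Matrix (Fin n₂) (Fin n₂) ℝ) (hB : IsUnit B)
    (F₃₁ : Matrix (Fin 1) (Fin n₁) ℝ) (F₃₂ : Matrix (Fin 1) (Fin n₂) ℝ) :
    Function.Bijective
        (Matrix.mulVec
          (Matrix.fromBlocks F₁₃
            (Matrix.fromCols (1 : Matrix (Fin n₁) (Fin n₁) ℝ)
              (0 : Matrix (Fin n₁) (Fin n₂) ℝ))
            (0 : Matrix (Fin n₂ ⊕ Fin 1) (Fin 1) ℝ)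
            (Matrix.fromRows (Matrix.fromCols A B)
              (Matrix.fromCols F₃₁ F₃₂)))) ↔
      (F₃₁ * F₁₃ - F₃₂ * B⁻¹ * A * F₁₃) 0 0 ≠ 0 := by
  rw [bijective_mulVec_iff_isUnit_submatrix _
      ((Equiv.sumComm _ _).trans (Equiv.sumAssoc _ _ _)),
    submatrix_fromBlocks_fromCols_one_zero_fromRows,
    isUnit_fromBlocks_zero_fromRows_fromBlocks_one_zero_iff _ _ _ _ hB]
  exact isUnit_iff_apply_ne_zero

/-- the `(n₁+n₂+1)×(n₁+n₂+1)` block matrix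
`[[F₁₃, I_{n₁}, 0], [0, A, B], [0, F₃₁, F₃₂]]` (block rows of heights `n₁, n₂, 1`,
block columns of widths `1, n₁, n₂`), with `B` invertible, is invertible iff
`F₃₁ F₁₃ − F₃₂ B⁻¹ A F₁₃ ≠ 0`.  Invertibility of the square-shaped matrix is
expressed as bijectivity of the associated linear map `x ↦ M x`. -/
theorem optimality_index2_criterion {n₁ n₂ : ℕ}
    (hn₁ : 1 ≤ n₁) (hn₂ : 1 ≤ n₂)
    (F₁₃ : Matrix (Fin n₁) (Fin 1) ℝ) (A : Matrix (Fin n₂) (Fin n₁) ℝ)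
    (B : Matrix (Fin n₂) (Fin n₂) ℝ) (hB : IsUnit B)
    (F₃₁ : Matrix (Fin 1) (Fin n₁) ℝ) (F₃₂ : Matrix (Fin 1) (Fin n₂) ℝ) :
    Function.Bijective
        (Matrix.mulVec
          (Matrix.fromBlocks F₁₃
            (Matrix.fromCols (1 : Matrix (Fin n₁) (Fin n₁) ℝ)
              (0 : Matrix (Fin n₁) (Fin n₂) ℝ))
            (0 : Matrix (Fin n₂ ⊕ Fin 1) (Fin 1) ℝ)
            (Matrix.fromRows (Matrix.fromCols A B)
              (Matrix.fromCols F₃₁ F₃₂)))) ↔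
      (F₃₁ * F₁₃ - F₃₂ * B⁻¹ * A * F₁₃) 0 0 ≠ 0 :=
  optimality_index2_criterion_general F₁₃ A B hB F₃₁ F₃₂
end

section
/- Let n₁, n₂ ≥ 1, F₁₃ ∈ ℝ^{n₁×1}, F₃₁ ∈ ℝ^{1×n₁}, F₃₂ ∈ ℝ^{1×n₂} with F₃₂ ≠ 0. Then the (n₁+1)×(1+n₁+n₂) block matrix C = [[F₁₃, I_{n₁}, 0], [0, F₃₁, F₃₂]] has a kernel vector (s₀, s₁, s₂) ∈ ℝ × ℝ^{n₁} × ℝ^{n₂} with s₀ = 1. In particular, the kernel of C is not contained in {(s₀, s₁, s₂) : s₀ = 0}, i.e., C is not 1-full with respect to its first column. -/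
open Matrix

/-!
The identity block lets the middle unknown absorb the first row: with `s₀ = 1` take
`s₁ = -F₁₃`. The last row then asks for `F₃₂ s₂ = F₃₁ F₁₃`, which is solvable because a nonzero
row vector maps onto the scalars.
-/

theorem Matrix.mulVec_surjective_of_ne_zero {K ι n : Type*} [Field K] [Unique ι] [Fintype n]
    {D : Matrix ι n K} (hD : D ≠ 0) : Function.Surjective D.mulVec := by
  classical
  obtain ⟨i, k, hik⟩ : ∃ i k, D i k ≠ 0 := by
    by_contra! h
    exact hD (Matrix.ext h)
  intro c
  refine ⟨Pi.single k (c i / D i k), funext fun j => ?_⟩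
  rw [Subsingleton.elim j i, mulVec, dotProduct_single]
  exact mul_div_cancel₀ _ hik

theorem Matrix.exists_fromBlocks_one_mulVec_eq_zero {R m n p q : Type*} [Ring R]
    [Fintype m] [Fintype n] [Fintype q] [DecidableEq n]
    (A : Matrix n m R) (B : Matrix p n R) {D : Matrix p q R}
    (hD : Function.Surjective D.mulVec) (x : m → R) :
    ∃ s : m ⊕ (n ⊕ q) → R,
      fromBlocks A (fromCols 1 0) 0 (fromCols B D) *ᵥ s = 0 ∧ s ∘ Sum.inl = x := by
  obtain ⟨z, hz⟩ := hD (B *ᵥ (A *ᵥ x))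
  refine ⟨Sum.elim x (Sum.elim (-(A *ᵥ x)) z), ?_, rfl⟩
  simp only [fromBlocks_mulVec, Sum.elim_comp_inl, Sum.elim_comp_inr, fromCols_mulVec_sumElim,
    one_mulVec, zero_mulVec, mulVec_neg, hz]
  simp

theorem optimality_not_oneFull_general {n₁ n₂ : ℕ}
    (F₁₃ : Matrix (Fin n₁) (Fin 1) ℝ) (F₃₁ : Matrix (Fin 1) (Fin n₁) ℝ)
    (F₃₂ : Matrix (Fin 1) (Fin n₂) ℝ) (hF₃₂ : F₃₂ ≠ 0) :
    (∃ s : Fin 1 ⊕ (Fin n₁ ⊕ Fin n₂) → ℝ,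
        (Matrix.fromBlocks F₁₃
            (Matrix.fromCols (1 : Matrix (Fin n₁) (Fin n₁) ℝ)
              (0 : Matrix (Fin n₁) (Fin n₂) ℝ))
            (0 : Matrix (Fin 1) (Fin 1) ℝ)
            (Matrix.fromCols F₃₁ F₃₂)).mulVec s = 0 ∧
          s (Sum.inl 0) = 1) ∧
      ¬ (∀ s : Fin 1 ⊕ (Fin n₁ ⊕ Fin n₂) → ℝ,
          (Matrix.fromBlocks F₁₃
              (Matrix.fromCols (1 : Matrix (Fin n₁) (Fin n₁) ℝ)
                (0 : Matrix (Fin n₁) (Fin n₂) ℝ))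
              (0 : Matrix (Fin 1) (Fin 1) ℝ)
              (Matrix.fromCols F₃₁ F₃₂)).mulVec s = 0 →
            s (Sum.inl 0) = 0) := by
  obtain ⟨s, hs, hs₀⟩ := exists_fromBlocks_one_mulVec_eq_zero F₁₃ F₃₁
    (mulVec_surjective_of_ne_zero hF₃₂) 1
  have hs₀ : s (Sum.inl 0) = 1 := congrFun hs₀ 0
  exact ⟨⟨s, hs, hs₀⟩, fun hfull => one_ne_zero (hs₀ ▸ hfull s hs)⟩

/-- if `F₃₂ ≠ 0`, the `(n₁+1)×(1+n₁+n₂)` block matrix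
`C = [[F₁₃, I_{n₁}, 0], [0, F₃₁, F₃₂]]` has a kernel vector
`(s₀, s₁, s₂)` with `s₀ = 1`; in particular `C` is not 1-full with respect to
its first column. -/
theorem optimality_not_oneFull {n₁ n₂ : ℕ} (hn₁ : 1 ≤ n₁) (hn₂ : 1 ≤ n₂)
    (F₁₃ : Matrix (Fin n₁) (Fin 1) ℝ) (F₃₁ : Matrix (Fin 1) (Fin n₁) ℝ)
    (F₃₂ : Matrix (Fin 1) (Fin n₂) ℝ) (hF₃₂ : F₃₂ ≠ 0) :
    (∃ s : Fin 1 ⊕ (Fin n₁ ⊕ Fin n₂) → ℝ,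
        (Matrix.fromBlocks F₁₃
            (Matrix.fromCols (1 : Matrix (Fin n₁) (Fin n₁) ℝ)
              (0 : Matrix (Fin n₁) (Fin n₂) ℝ))
            (0 : Matrix (Fin 1) (Fin 1) ℝ)
            (Matrix.fromCols F₃₁ F₃₂)).mulVec s = 0 ∧
          s (Sum.inl 0) = 1) ∧
      ¬ (∀ s : Fin 1 ⊕ (Fin n₁ ⊕ Fin n₂) → ℝ,
          (Matrix.fromBlocks F₁₃
              (Matrix.fromCols (1 : Matrix (Fin n₁) (Fin n₁) ℝ)
                (0 : Matrix (Fin n₁) (Fin n₂) ℝ))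
              (0 : Matrix (Fin 1) (Fin 1) ℝ)
              (Matrix.fromCols F₃₁ F₃₂)).mulVec s = 0 →
            s (Sum.inl 0) = 0) :=
  optimality_not_oneFull_general F₁₃ F₃₁ F₃₂ hF₃₂
end

section
/- Let n₁, n₂ ≥ 1, let J₁₁ ∈ ℝ^{n₁×n₁}, J₁₂ ∈ ℝ^{n₁×n₂}, J₂₁ ∈ ℝ^{n₂×n₁}, let J₂₂ ∈ ℝ^{n₂×n₂} be invertible, let F₁₃ ∈ ℝ^{n₁×1}, F₃₁ ∈ ℝ^{1×n₁}, F₃₂ ∈ ℝ^{1×n₂}, and set N = n₁+n₂+1. Consider the 2N×2N block matrix B¹ whose first three block rows are [[I_{n₁},0,0,0,0,0],[0,0,0,0,0,0],[0,0,0,0,0,0]] and whose last three block rows are [[J₁₁, J₁₂, F₁₃, I_{n₁}, 0, 0],[J₂₁, J₂₂, 0, 0, 0, 0],[F₃₁, F₃₂, 0, 0, 0, 0]], with block column widths n₁, n₂, 1, n₁, n₂, 1. Then ker B¹ = {(0, 0, s₃, −F₁₃ s₃, u₂, u₃) : s₃ ∈ ℝ, u₂ ∈ ℝ^{n₂}, u₃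 ∈ ℝ}. In particular, B¹ has a kernel vector whose third block component s₃ equals 1, so B¹ is not 1-full with respect to its first N columns. -/
/-!
Write `x = (s₁, s₂, s₃, u₁, u₂, u₃)`. The first block row forces `s₁ = 0`. The second lower
block row then reads `J₂₂ s₂ = 0`, so `s₂ = 0` because `J₂₂` is invertible; the phase-condition
row holds automatically, and the first lower block row solves for `u₁ = -F₁₃ s₃`. Nothing
constrains `s₃`, `u₂`, `u₃`, whence the kernel vector `(0, 0, 1, -F₁₃ 1, 0, 0)`.
-/

open Matrix

/-- A 3×3 block matrix with block rows/columns of sizes `n₁, n₂, 1`. -/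
noncomputable def blockMatrix3 {n₁ n₂ : ℕ}
    (A11 : Matrix (Fin n₁) (Fin n₁) ℝ) (A12 : Matrix (Fin n₁) (Fin n₂) ℝ)
    (A13 : Matrix (Fin n₁) (Fin 1) ℝ)
    (A21 : Matrix (Fin n₂) (Fin n₁) ℝ) (A22 : Matrix (Fin n₂) (Fin n₂) ℝ)
    (A23 : Matrix (Fin n₂) (Fin 1) ℝ)
    (A31 : Matrix (Fin 1) (Fin n₁) ℝ) (A32 : Matrix (Fin 1) (Fin n₂) ℝ)
    (A33 : Matrix (Fin 1) (Fin 1) ℝ) :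
    Matrix (Fin n₁ ⊕ (Fin n₂ ⊕ Fin 1)) (Fin n₁ ⊕ (Fin n₂ ⊕ Fin 1)) ℝ :=
  Matrix.fromBlocks A11 (Matrix.fromCols A12 A13)
    (Matrix.fromRows A21 A31) (Matrix.fromBlocks A22 A23 A32 A33)

/-- The matrix `ℬ^{[1]}` of the structural index analysis for the phase
condition: a `2N×2N` matrix (`N = n₁+n₂+1`) with block column widths
`n₁, n₂, 1, n₁, n₂, 1`, whose first three block rows are
`[[I,0,0,0,0,0],[0,…,0],[0,…,0]]` and whose last three block rows are
`[[J₁₁, J₁₂, F₁₃, I, 0, 0],[J₂₁, J₂₂, 0, 0, 0, 0],[F₃₁, F₃₂, 0, 0, 0, 0]]`. -/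
noncomputable def calB1 {n₁ n₂ : ℕ}
    (J₁₁ : Matrix (Fin n₁) (Fin n₁) ℝ) (J₁₂ : Matrix (Fin n₁) (Fin n₂) ℝ)
    (J₂₁ : Matrix (Fin n₂) (Fin n₁) ℝ) (J₂₂ : Matrix (Fin n₂) (Fin n₂) ℝ)
    (F₁₃ : Matrix (Fin n₁) (Fin 1) ℝ) (F₃₁ : Matrix (Fin 1) (Fin n₁) ℝ)
    (F₃₂ : Matrix (Fin 1) (Fin n₂) ℝ) :
    Matrix ((Fin n₁ ⊕ (Fin n₂ ⊕ Fin 1)) ⊕ (Fin n₁ ⊕ (Fin n₂ ⊕ Fin 1)))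
      ((Fin n₁ ⊕ (Fin n₂ ⊕ Fin 1)) ⊕ (Fin n₁ ⊕ (Fin n₂ ⊕ Fin 1))) ℝ :=
  Matrix.fromBlocks
    (blockMatrix3 (1 : Matrix (Fin n₁) (Fin n₁) ℝ) 0 0 0 0 0 0 0 0) 0
    (blockMatrix3 J₁₁ J₁₂ F₁₃ J₂₁ J₂₂ 0 F₃₁ F₃₂ 0)
    (blockMatrix3 (1 : Matrix (Fin n₁) (Fin n₁) ℝ) 0 0 0 0 0 0 0 0)

theorem blockMatrix3_mulVec {n₁ n₂ : ℕ}
    (A11 : Matrix (Fin n₁) (Fin n₁) ℝ) (A12 : Matrix (Fin n₁) (Fin n₂) ℝ)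
    (A13 : Matrix (Fin n₁) (Fin 1) ℝ)
    (A21 : Matrix (Fin n₂) (Fin n₁) ℝ) (A22 : Matrix (Fin n₂) (Fin n₂) ℝ)
    (A23 : Matrix (Fin n₂) (Fin 1) ℝ)
    (A31 : Matrix (Fin 1) (Fin n₁) ℝ) (A32 : Matrix (Fin 1) (Fin n₂) ℝ)
    (A33 : Matrix (Fin 1) (Fin 1) ℝ) (v : Fin n₁ ⊕ (Fin n₂ ⊕ Fin 1) → ℝ) :
    blockMatrix3 A11 A12 A13 A21 A22 A23 A31 A32 A33 *ᵥ v =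
      Sum.elim (A11 *ᵥ (v ∘ .inl) + A12 *ᵥ (v ∘ .inr ∘ .inl) + A13 *ᵥ (v ∘ .inr ∘ .inr))
        (Sum.elim (A21 *ᵥ (v ∘ .inl) + A22 *ᵥ (v ∘ .inr ∘ .inl) + A23 *ᵥ (v ∘ .inr ∘ .inr))
          (A31 *ᵥ (v ∘ .inl) + A32 *ᵥ (v ∘ .inr ∘ .inl) + A33 *ᵥ (v ∘ .inr ∘ .inr))) := by
  simp only [blockMatrix3, fromBlocks_mulVec, fromCols_mulVec, fromRows_mulVec, Sum.elim_add_add,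
    add_assoc]
  rfl

theorem Sum.elim_eq_zero_iff {α β γ : Type*} [Zero γ] {f : α → γ} {g : β → γ} :
    Sum.elim f g = 0 ↔ f = 0 ∧ g = 0 := by
  rw [← Sum.elim_zero_zero, Sum.elim_eq_iff]

section calB1

variable {n₁ n₂ : ℕ}
    {J₁₁ : Matrix (Fin n₁) (Fin n₁) ℝ} {J₁₂ : Matrix (Fin n₁) (Fin n₂) ℝ}
    {J₂₁ : Matrix (Fin n₂) (Fin n₁) ℝ} {J₂₂ : Matrix (Fin n₂) (Fin n₂) ℝ}
    {F₁₃ : Matrix (Fin n₁) (Fin 1) ℝ} {F₃₁ : Matrix (Fin 1) (Fin n₁) ℝ}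
    {F₃₂ : Matrix (Fin 1) (Fin n₂) ℝ}

theorem calB1_mulVec_eq_zero_iff
    (x : (Fin n₁ ⊕ (Fin n₂ ⊕ Fin 1)) ⊕ (Fin n₁ ⊕ (Fin n₂ ⊕ Fin 1)) → ℝ) :
    calB1 J₁₁ J₁₂ J₂₁ J₂₂ F₁₃ F₃₁ F₃₂ *ᵥ x = 0 ↔
      x ∘ .inl ∘ .inl = 0 ∧
      J₁₁ *ᵥ (x ∘ .inl ∘ .inl) + J₁₂ *ᵥ (x ∘ .inl ∘ .inr ∘ .inl) +
        F₁₃ *ᵥ (x ∘ .inl ∘ .inr ∘ .inr) + x ∘ .inr ∘ .inl = 0 ∧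
      J₂₁ *ᵥ (x ∘ .inl ∘ .inl) + J₂₂ *ᵥ (x ∘ .inl ∘ .inr ∘ .inl) = 0 ∧
      F₃₁ *ᵥ (x ∘ .inl ∘ .inl) + F₃₂ *ᵥ (x ∘ .inl ∘ .inr ∘ .inl) = 0 := by
  simp only [calB1, fromBlocks_mulVec, blockMatrix3_mulVec, zero_mulVec, one_mulVec, add_zero,
    ← Sum.elim_add_add, Sum.elim_eq_zero_iff, Function.comp_assoc, and_assoc, true_and]

theorem calB1_mulVec_eq_zero_iff_of_isUnit (hJ₂₂ : IsUnit J₂₂)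
    (x : (Fin n₁ ⊕ (Fin n₂ ⊕ Fin 1)) ⊕ (Fin n₁ ⊕ (Fin n₂ ⊕ Fin 1)) → ℝ) :
    calB1 J₁₁ J₁₂ J₂₁ J₂₂ F₁₃ F₃₁ F₃₂ *ᵥ x = 0 ↔
      x ∘ .inl ∘ .inl = 0 ∧ x ∘ .inl ∘ .inr ∘ .inl = 0 ∧
        x ∘ .inr ∘ .inl = -(F₁₃ *ᵥ (x ∘ .inl ∘ .inr ∘ .inr)) := by
  rw [calB1_mulVec_eq_zero_iff]
  constructor
  · rintro ⟨hs₁, hrow₁, hrow₂, -⟩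
    rw [hs₁, mulVec_zero, zero_add] at hrow₁ hrow₂
    have hs₂ : x ∘ .inl ∘ .inr ∘ .inl = 0 :=
      mulVec_injective_iff_isUnit.2 hJ₂₂ (hrow₂.trans (mulVec_zero J₂₂).symm)
    rw [hs₂, mulVec_zero, zero_add] at hrow₁
    exact ⟨hs₁, hs₂, eq_neg_of_add_eq_zero_right hrow₁⟩
  · rintro ⟨hs₁, hs₂, hu₁⟩
    simp [hs₁, hs₂, hu₁]

end calB1

theorem calB1_kernel_general {n₁ n₂ : ℕ}
    (J₁₁ : Matrix (Fin n₁) (Fin n₁) ℝ) (J₁₂ : Matrix (Fin n₁) (Fin n₂) ℝ)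
    (J₂₁ : Matrix (Fin n₂) (Fin n₁) ℝ) (J₂₂ : Matrix (Fin n₂) (Fin n₂) ℝ)
    (hJ₂₂ : IsUnit J₂₂)
    (F₁₃ : Matrix (Fin n₁) (Fin 1) ℝ) (F₃₁ : Matrix (Fin 1) (Fin n₁) ℝ)
    (F₃₂ : Matrix (Fin 1) (Fin n₂) ℝ) :
    (∀ x : (Fin n₁ ⊕ (Fin n₂ ⊕ Fin 1)) ⊕ (Fin n₁ ⊕ (Fin n₂ ⊕ Fin 1)) → ℝ,
        (calB1 J₁₁ J₁₂ J₂₁ J₂₂ F₁₃ F₃₁ F₃₂).mulVec x = 0 ↔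
          ((∀ i : Fin n₁, x (Sum.inl (Sum.inl i)) = 0) ∧
            (∀ i : Fin n₂, x (Sum.inl (Sum.inr (Sum.inl i))) = 0) ∧
            (∀ i : Fin n₁, x (Sum.inr (Sum.inl i)) =
              -(F₁₃.mulVec (fun k => x (Sum.inl (Sum.inr (Sum.inr k)))) i)))) ∧
      (∃ x : (Fin n₁ ⊕ (Fin n₂ ⊕ Fin 1)) ⊕ (Fin n₁ ⊕ (Fin n₂ ⊕ Fin 1)) → ℝ,
        (calB1 J₁₁ J₁₂ J₂₁ J₂₂ F₁₃ F₃₁ F₃₂).mulVec x = 0 ∧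
          x (Sum.inl (Sum.inr (Sum.inr 0))) = 1) ∧
      ¬ (∀ x : (Fin n₁ ⊕ (Fin n₂ ⊕ Fin 1)) ⊕ (Fin n₁ ⊕ (Fin n₂ ⊕ Fin 1)) → ℝ,
          (calB1 J₁₁ J₁₂ J₂₁ J₂₂ F₁₃ F₃₁ F₃₂).mulVec x = 0 →
            ∀ i : Fin n₁ ⊕ (Fin n₂ ⊕ Fin 1), x (Sum.inl i) = 0) := by
  obtain ⟨v, hv, hv₃⟩ : ∃ x : (Fin n₁ ⊕ (Fin n₂ ⊕ Fin 1)) ⊕ (Fin n₁ ⊕ (Fin n₂ ⊕ Fin 1)) → ℝ,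
      calB1 J₁₁ J₁₂ J₂₁ J₂₂ F₁₃ F₃₁ F₃₂ *ᵥ x = 0 ∧ x (.inl (.inr (.inr 0))) = 1 :=
    ⟨Sum.elim (Sum.elim 0 (Sum.elim 0 1)) (Sum.elim (-(F₁₃ *ᵥ 1)) 0),
      (calB1_mulVec_eq_zero_iff_of_isUnit hJ₂₂ _).2 ⟨rfl, rfl, rfl⟩, rfl⟩
  refine ⟨fun x ↦ (calB1_mulVec_eq_zero_iff_of_isUnit hJ₂₂ x).trans ?_, ⟨v, hv, hv₃⟩,
    fun hfull ↦ ?_⟩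
  · simp only [funext_iff]
    rfl
  · exact one_ne_zero (hv₃ ▸ hfull v hv (.inr (.inr 0)))

/-- with `J₂₂` invertible, the kernel of `ℬ^{[1]}` is
`{(0, 0, s₃, −F₁₃ s₃, u₂, u₃)}`; in particular there is a kernel vector whose
third block component equals `1`, so `ℬ^{[1]}` is not 1-full with respect to its
first `N` columns. -/
theorem calB1_kernel {n₁ n₂ : ℕ} (hn₁ : 1 ≤ n₁) (hn₂ : 1 ≤ n₂)
    (J₁₁ : Matrix (Fin n₁) (Fin n₁) ℝ) (J₁₂ : Matrix (Fin n₁) (Fin n₂) ℝ)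
    (J₂₁ : Matrix (Fin n₂) (Fin n₁) ℝ) (J₂₂ : Matrix (Fin n₂) (Fin n₂) ℝ)
    (hJ₂₂ : IsUnit J₂₂)
    (F₁₃ : Matrix (Fin n₁) (Fin 1) ℝ) (F₃₁ : Matrix (Fin 1) (Fin n₁) ℝ)
    (F₃₂ : Matrix (Fin 1) (Fin n₂) ℝ) :
    (∀ x : (Fin n₁ ⊕ (Fin n₂ ⊕ Fin 1)) ⊕ (Fin n₁ ⊕ (Fin n₂ ⊕ Fin 1)) → ℝ,
        (calB1 J₁₁ J₁₂ J₂₁ J₂₂ F₁₃ F₃₁ F₃₂).mulVec x = 0 ↔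
          ((∀ i : Fin n₁, x (Sum.inl (Sum.inl i)) = 0) ∧
            (∀ i : Fin n₂, x (Sum.inl (Sum.inr (Sum.inl i))) = 0) ∧
            (∀ i : Fin n₁, x (Sum.inr (Sum.inl i)) =
              -(F₁₃.mulVec (fun k => x (Sum.inl (Sum.inr (Sum.inr k)))) i)))) ∧
      (∃ x : (Fin n₁ ⊕ (Fin n₂ ⊕ Fin 1)) ⊕ (Fin n₁ ⊕ (Fin n₂ ⊕ Fin 1)) → ℝ,
        (calB1 J₁₁ J₁₂ J₂₁ J₂₂ F₁₃ F₃₁ F₃₂).mulVec x = 0 ∧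
          x (Sum.inl (Sum.inr (Sum.inr 0))) = 1) ∧
      ¬ (∀ x : (Fin n₁ ⊕ (Fin n₂ ⊕ Fin 1)) ⊕ (Fin n₁ ⊕ (Fin n₂ ⊕ Fin 1)) → ℝ,
          (calB1 J₁₁ J₁₂ J₂₁ J₂₂ F₁₃ F₃₁ F₃₂).mulVec x = 0 →
            ∀ i : Fin n₁ ⊕ (Fin n₂ ⊕ Fin 1), x (Sum.inl i) = 0) :=
  calB1_kernel_general J₁₁ J₁₂ J₂₁ J₂₂ hJ₂₂ F₁₃ F₃₁ F₃₂
end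

section
/- Let x̂ : ℝ × ℝ → ℝⁿ be continuously differentiable, ν : ℝ → ℝ continuous, q : ℝⁿ → ℝⁿ continuously differentiable, b : ℝ → ℝ^{n_in} and f : ℝ^{n_in} × ℝⁿ → ℝⁿ given. Assume the multirate partial differential algebraic equation ∂/∂t₁ q(x̂(t₁,t₂)) + ν(t₁) ∂/∂t₂ q(x̂(t₁,t₂)) = f(b(t₁), x̂(t₁,t₂)) holds for all (t₁,t₂). Define Ψ(t) := ∫₀ᵗ ν(τ) dτ and x(t) := x̂(t, Ψ(t)). Then for every t, the function t ↦ q(x(t)) is differentiable with d/dt q(x(t)) = f(b(t), x(t)), i.e., x solves the original differential algebraic equation; moreover x(0) = x̂(0,0). -/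
open Filter intervalIntegral

/-!
Along the characteristic `t ↦ (t, Ψ t)` the chain rule gives
`d/dt q(x̂(t, Ψ t)) = ∂₁ q(x̂) + Ψ'(t) ∂₂ q(x̂)`, and `Ψ' = ν` by the fundamental theorem of
calculus, so the right-hand side is exactly the left-hand side of the MPDAE at `(t, Ψ t)`.
-/

section Characteristic

variable {E : Type*} [NormedAddCommGroup E] [NormedSpace ℝ E] {F : ℝ × ℝ → E}

theorem DifferentiableAt.hasDerivAt_comp_prodMk {γ₁ γ₂ : ℝ → ℝ} {v₁ v₂ t : ℝ}
    (hF : DifferentiableAt ℝ F (γ₁ t, γ₂ t)) (h₁ : HasDerivAt γ₁ v₁ t)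
    (h₂ : HasDerivAt γ₂ v₂ t) :
    HasDerivAt (fun s => F (γ₁ s, γ₂ s)) (fderiv ℝ F (γ₁ t, γ₂ t) (v₁, v₂)) t :=
  hF.hasFDerivAt.comp_hasDerivAt (f := fun s => (γ₁ s, γ₂ s)) t (h₁.prodMk h₂)

theorem DifferentiableAt.deriv_partial_fst {x y : ℝ} (hF : DifferentiableAt ℝ F (x, y)) :
    deriv (fun s => F (s, y)) x = fderiv ℝ F (x, y) (1, 0) :=
  (hF.hasDerivAt_comp_prodMk (γ₁ := fun s => s) (hasDerivAt_id x) (hasDerivAt_const x y)).deriv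

theorem DifferentiableAt.deriv_partial_snd {x y : ℝ} (hF : DifferentiableAt ℝ F (x, y)) :
    deriv (fun s => F (x, s)) y = fderiv ℝ F (x, y) (0, 1) :=
  (hF.hasDerivAt_comp_prodMk (γ₂ := fun s => s) (hasDerivAt_const y x) (hasDerivAt_id y)).deriv

theorem DifferentiableAt.hasDerivAt_comp_graph {Ψ : ℝ → ℝ} {t v : ℝ}
    (hF : DifferentiableAt ℝ F (t, Ψ t)) (hΨ : HasDerivAt Ψ v t) :
    HasDerivAt (fun s => F (s, Ψ s))
      (deriv (fun s => F (s, Ψ t)) t + v • deriv (fun s => F (t, s)) (Ψ t)) t := by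
  have hsplit : ((1, v) : ℝ × ℝ) = (1, 0) + v • (0, 1) := by simp
  have hchain := hF.hasDerivAt_comp_prodMk (γ₁ := fun s => s) (hasDerivAt_id t) hΨ
  rwa [hsplit, map_add, map_smul, ← hF.deriv_partial_fst, ← hF.deriv_partial_snd] at hchain

end Characteristic

/-- if `x̂` solves the MPDAE
`∂/∂t₁ q(x̂(t₁,t₂)) + ν(t₁) ∂/∂t₂ q(x̂(t₁,t₂)) = f(b(t₁), x̂(t₁,t₂))`,
then the reconstruction `x(t) = x̂(t, Ψ(t))` with `Ψ(t) = ∫₀ᵗ ν` solves the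
original DAE `d/dt q(x(t)) = f(b(t), x(t))`, and `x(0) = x̂(0,0)`. -/
theorem mpdae_reconstruction_solves_dae {n n_in : ℕ}
    (xh : ℝ × ℝ → Fin n → ℝ) (hxh : ContDiff ℝ 1 xh)
    (ν : ℝ → ℝ) (hν : Continuous ν)
    (q : (Fin n → ℝ) → Fin n → ℝ) (hq : ContDiff ℝ 1 q)
    (b : ℝ → Fin n_in → ℝ) (f : (Fin n_in → ℝ) → (Fin n → ℝ) → Fin n → ℝ)
    (hmpdae : ∀ t₁ t₂ : ℝ,
      deriv (fun s => q (xh (s, t₂))) t₁ + ν t₁ • deriv (fun s => q (xh (t₁, s))) t₂ =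
        f (b t₁) (xh (t₁, t₂))) :
    (∀ t : ℝ,
        HasDerivAt (fun s => q (xh (s, ∫ τ in (0 : ℝ)..s, ν τ)))
          (f (b t) (xh (t, ∫ τ in (0 : ℝ)..t, ν τ))) t) ∧
      xh (0, ∫ τ in (0 : ℝ)..(0 : ℝ), ν τ) = xh (0, 0) := by
  have hQ : Differentiable ℝ (fun p : ℝ × ℝ => q (xh p)) :=
    (hq.comp hxh).differentiable one_ne_zero
  refine ⟨fun t => ?_, by simp⟩
  have hΨ : HasDerivAt (fun s => ∫ τ in (0 : ℝ)..s, ν τ) (ν t) t :=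
    (hν.integral_hasStrictDerivAt 0 t).hasDerivAt
  rw [← hmpdae]
  exact (hQ _).hasDerivAt_comp_graph hΨ
end
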